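/- For the zero-modified geometric prior with parameter ρ_α → 0, the weighted log-prior sum satisfies ∑_{k=0}^∞ |log ω_k|^r ω_k ≤ ω₀|log ω₀|^r + (1−ω₀)[|log(1−ω₀)|^r + |log ρ_α|^r + |log(1−ρ_α)|^r/ρ_α]·C_r for a constant C_r depending only on r≥1 (via the inequality |a+b+c|^r ≤ 3^{r−1}(|a|^r+|b|^r+|c|^r)), and consequently if |log ρ_α|/|log α| → 0 as α→0 then ∑_k |log ω_k^α|^r ω_k^α / |log α|^r → 0. -/

import Mathlib

open Filter

noncomputable def zmGeom (ω₀ ρ : ℝ) : ℕ → ℝ :=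
  fun k => if k = 0 then ω₀ else (1 - ω₀) * ρ * (1 - ρ) ^ (k - 1)

open Real Topology

/-!
For `m ≥ 0` the weight `ω_{m+1} = (1 - ω₀) ρ (1 - ρ)^m` has
`|log ω_{m+1}| ≤ |log (1 - ω₀)| + |log ρ| + m |log (1 - ρ)|`, and the power-mean inequality splits
the `r`-th power into three terms. The first two sum against the geometric weights to themselves.
For the third, with `x = |log (1 - ρ)|` we have `(m x)^r e^{-m x} ≤ (2r/e)^r e^{-m x/2}`, so
its weighted sum is bounded by a constant independent of `ρ`; that constant is absorbed into
`|log ρ|^r + |log (1 - ρ)|^r` because one of `ρ, 1 - ρ` is at most `1/2`.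
For the limit, `|log (1 - ρ)|^r / ρ ≤ 2^r` once `ρ ≤ 1/2`, so the bound is
`O(1 + |log ρ|^r) = o(|log α|^r)`, and `|log α| → ∞` because `|log ρ| → ∞`.
-/

lemma rpow_mul_exp_neg_le {r x : ℝ} (hr : 0 < r) (hx : 0 ≤ x) :
    x ^ r * exp (-x) ≤ (r / exp 1) ^ r := by
  have hdiv : (x / r) ^ r ≤ exp (x - r) :=
    calc (x / r) ^ r ≤ exp (x / r - 1) ^ r :=
          rpow_le_rpow (by positivity) (by linarith [add_one_le_exp (x / r - 1)]) hr.le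
      _ = exp (x - r) := by rw [← exp_mul]; congr 1; field_simp
  calc x ^ r * exp (-x) = r ^ r * (x / r) ^ r * exp (-x) := by
        rw [div_rpow hx hr.le]; field_simp
    _ ≤ r ^ r * exp (x - r) * exp (-x) := by gcongr
    _ = (r / exp 1) ^ r := by
        rw [div_rpow hr.le (exp_pos 1).le, exp_one_rpow, mul_assoc, ← exp_add, div_eq_mul_inv,
          ← exp_neg]
        ring_nf

lemma rpow_mul_exp_neg_le_geometric {r x : ℝ} (hr : 0 < r) (hx : 0 ≤ x) (m : ℕ) :
    (m * x) ^ r * exp (-(m * x)) ≤ (2 * r / exp 1) ^ r * exp (-(x / 2)) ^ m := by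
  have hy : 0 ≤ m * x / 2 := by positivity
  calc (m * x) ^ r * exp (-(m * x))
      = 2 ^ r * ((m * x / 2) ^ r * exp (-(m * x / 2))) * exp (-(x / 2)) ^ m := by
        have hpow : (m * x) ^ r = 2 ^ r * (m * x / 2) ^ r := by
          rw [← mul_rpow zero_le_two hy]; ring_nf
        have hexp : exp (-(m * x)) = exp (-(m * x / 2)) * exp (-(x / 2)) ^ m := by
          rw [← exp_nat_mul, ← exp_add]; ring_nf
        rw [hpow, hexp]; ring
    _ ≤ 2 ^ r * (r / exp 1) ^ r * exp (-(x / 2)) ^ m := by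
        gcongr
        exact rpow_mul_exp_neg_le hr hy
    _ = (2 * r / exp 1) ^ r * exp (-(x / 2)) ^ m := by
        rw [← mul_rpow zero_le_two (by positivity), mul_div_assoc]

lemma rpow_mul_geometric_le {r q : ℝ} (hr : 0 < r) (hq₀ : 0 < q) (hq₁ : q ≤ 1) (m : ℕ) :
    (m * |log q|) ^ r * q ^ m ≤ (2 * r / exp 1) ^ r * exp (-(|log q| / 2)) ^ m := by
  have hq : q ^ m = exp (-(m * |log q|)) := by
    rw [abs_of_nonpos (log_nonpos hq₀.le hq₁), mul_neg, neg_neg, exp_nat_mul, exp_log hq₀]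
  rw [hq]
  exact rpow_mul_exp_neg_le_geometric hr (abs_nonneg _) m

lemma summable_rpow_mul_geometric {r q : ℝ} (hr : 0 < r) (hq₀ : 0 < q) (hq₁ : q < 1) :
    Summable (fun m : ℕ => (m * |log q|) ^ r * q ^ m) := by
  refine .of_nonneg_of_le (fun m => by positivity) (rpow_mul_geometric_le hr hq₀ hq₁.le)
    ((summable_geometric_of_lt_one (exp_pos _).le ?_).mul_left _)
  exact exp_lt_one_iff.mpr (by linarith [abs_pos.mpr (log_neg hq₀ hq₁).ne])

lemma one_sub_mul_tsum_rpow_mul_geometric_le {r q : ℝ} (hr : 0 < r) (hq₀ : 0 < q) (hq₁ : q < 1) :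
    (1 - q) * ∑' m : ℕ, (m * |log q|) ^ r * q ^ m ≤ 2 * (2 * r / exp 1) ^ r := by
  set s := exp (-(|log q| / 2))
  have hs0 : 0 < s := exp_pos _
  have hs1 : s < 1 := exp_lt_one_iff.mpr (by linarith [abs_pos.mpr (log_neg hq₀ hq₁).ne])
  -- `s = √q`, so `1 - q = (1 - s) (1 + s) ≤ 2 (1 - s)`
  have hss : s * s = q := by
    rw [← exp_add, abs_of_neg (log_neg hq₀ hq₁)]
    ring_nf
    exact exp_log hq₀
  have hsum : ∑' m : ℕ, (m * |log q|) ^ r * q ^ m ≤ (2 * r / exp 1) ^ r * (1 - s)⁻¹ := by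
    rw [← tsum_geometric_of_lt_one hs0.le hs1, ← tsum_mul_left]
    exact (summable_rpow_mul_geometric hr hq₀ hq₁).tsum_le_tsum
      (rpow_mul_geometric_le hr hq₀ hq₁.le)
      ((summable_geometric_of_lt_one hs0.le hs1).mul_left _)
  calc (1 - q) * ∑' m : ℕ, (m * |log q|) ^ r * q ^ m
      ≤ 2 * (1 - s) * ((2 * r / exp 1) ^ r * (1 - s)⁻¹) := by
        gcongr
        nlinarith
    _ = 2 * (2 * r / exp 1) ^ r := by field_simp [(sub_pos.mpr hs1).ne']

lemma add_add_rpow_le {p a b c : ℝ} (hp : 1 ≤ p) (ha : 0 ≤ a) (hb : 0 ≤ b) (hc : 0 ≤ c) :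
    (a + b + c) ^ p ≤ 3 ^ (p - 1) * (a ^ p + b ^ p + c ^ p) := by
  have h := rpow_sum_le_const_mul_sum_rpow_of_nonneg (s := Finset.univ) (f := ![a, b, c]) hp
    (by simp [Fin.forall_fin_succ, ha, hb, hc])
  simpa [Fin.sum_univ_three, add_assoc] using h

lemma zmGeom_nonneg {ω₀ ρ : ℝ} (hω₀ : 0 ≤ ω₀) (hω₁ : ω₀ ≤ 1) (hρ₀ : 0 ≤ ρ) (hρ₁ : ρ ≤ 1)
    (k : ℕ) : 0 ≤ zmGeom ω₀ ρ k := by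
  unfold zmGeom
  split_ifs
  · exact hω₀
  · exact mul_nonneg (mul_nonneg (sub_nonneg.mpr hω₁) hρ₀) (pow_nonneg (sub_nonneg.mpr hρ₁) _)

lemma zmGeom_succ (ω₀ ρ : ℝ) (m : ℕ) : zmGeom ω₀ ρ (m + 1) = (1 - ω₀) * ρ * (1 - ρ) ^ m := by
  simp [zmGeom]

lemma abs_log_zmGeom_succ_rpow_le {r ω₀ ρ : ℝ} (hr : 1 ≤ r) (hω₁ : ω₀ < 1) (hρ₀ : 0 < ρ)
    (hρ₁ : ρ < 1) (m : ℕ) :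
    |log (zmGeom ω₀ ρ (m + 1))| ^ r ≤
      3 ^ (r - 1) * (|log (1 - ω₀)| ^ r + |log ρ| ^ r + (m * |log (1 - ρ)|) ^ r) := by
  have hlog : log (zmGeom ω₀ ρ (m + 1)) = log (1 - ω₀) + log ρ + m * log (1 - ρ) := by
    rw [zmGeom_succ, log_mul (by nlinarith) (pow_ne_zero _ (by linarith)),
      log_mul (by linarith) hρ₀.ne', log_pow]
  have habs : |log (zmGeom ω₀ ρ (m + 1))| ≤ |log (1 - ω₀)| + |log ρ| + m * |log (1 - ρ)| := by
    calc |log (zmGeom ω₀ ρ (m + 1))| ≤ |log (1 - ω₀) + log ρ| + |m * log (1 - ρ)| := by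
          rw [hlog]; exact abs_add_le _ _
      _ ≤ _ := by rw [abs_mul, Nat.abs_cast]; gcongr; exact abs_add_le _ _
  exact (rpow_le_rpow (abs_nonneg _) habs (by linarith)).trans
    (add_add_rpow_le hr (abs_nonneg _) (abs_nonneg _) (by positivity))

lemma tsum_abs_log_rpow_mul_zmGeom_le {r ω₀ ρ : ℝ} (hr : 1 ≤ r) (hω₀ : 0 < ω₀) (hω₁ : ω₀ < 1)
    (hρ₀ : 0 < ρ) (hρ₁ : ρ < 1) :
    ∑' k : ℕ, |log (zmGeom ω₀ ρ k)| ^ r * zmGeom ω₀ ρ k ≤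
      ω₀ * |log ω₀| ^ r + (1 - ω₀) * 3 ^ (r - 1) *
        (|log (1 - ω₀)| ^ r + |log ρ| ^ r + 2 * (2 * r / exp 1) ^ r) := by
  set f : ℕ → ℝ := fun k => |log (zmGeom ω₀ ρ k)| ^ r * zmGeom ω₀ ρ k
  set c := |log (1 - ω₀)| ^ r + |log ρ| ^ r
  set g : ℕ → ℝ := fun m => (1 - ω₀) * 3 ^ (r - 1) *
    (c * ρ * (1 - ρ) ^ m + ρ * ((m * |log (1 - ρ)|) ^ r * (1 - ρ) ^ m))
  have hq₀ : 0 < 1 - ρ := by linarith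
  have hq₁ : 1 - ρ < 1 := by linarith
  have hfg (m : ℕ) : f (m + 1) ≤ g m := by
    calc f (m + 1) ≤ 3 ^ (r - 1) * (c + (m * |log (1 - ρ)|) ^ r) * zmGeom ω₀ ρ (m + 1) := by
          refine mul_le_mul_of_nonneg_right ?_ (zmGeom_nonneg hω₀.le hω₁.le hρ₀.le hρ₁.le _)
          simpa only [c, add_assoc] using abs_log_zmGeom_succ_rpow_le hr hω₁ hρ₀ hρ₁ m
      _ = g m := by rw [zmGeom_succ]; ring
  have hgeom := summable_geometric_of_lt_one hq₀.le hq₁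
  have hmom := summable_rpow_mul_geometric (lt_of_lt_of_le one_pos hr) hq₀ hq₁
  have hg : Summable g := ((hgeom.mul_left _).add (hmom.mul_left _)).mul_left _
  have hf : Summable (fun m => f (m + 1)) :=
    .of_nonneg_of_le (fun m => by positivity [zmGeom_nonneg hω₀.le hω₁.le hρ₀.le hρ₁.le (m + 1)])
      hfg hg
  have htsum_g : ∑' m, g m = (1 - ω₀) * 3 ^ (r - 1) *
      (c + (1 - (1 - ρ)) * ∑' m : ℕ, (m * |log (1 - ρ)|) ^ r * (1 - ρ) ^ m) := by
    simp only [g, tsum_mul_left, (hgeom.mul_left _).tsum_add (hmom.mul_left _),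
      tsum_geometric_of_lt_one hq₀.le hq₁, sub_sub_cancel]
    rw [mul_assoc c, mul_inv_cancel₀ hρ₀.ne', mul_one]
  calc ∑' k, f k = f 0 + ∑' m, f (m + 1) := ((summable_nat_add_iff 1).mp hf).tsum_eq_zero_add
    _ ≤ f 0 + ∑' m, g m := add_le_add_right (hf.tsum_le_tsum hfg hg) _
    _ ≤ _ := by
        have hf0 : f 0 = ω₀ * |log ω₀| ^ r := by simp [f, zmGeom, mul_comm]
        rw [htsum_g, hf0]
        gcongr _ + _ * (_ + ?_)
        exact one_sub_mul_tsum_rpow_mul_geometric_le (lt_of_lt_of_le one_pos hr) hq₀ hq₁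

lemma log_two_le_abs_log {x : ℝ} (hx₀ : 0 < x) (hx : x ≤ 1 / 2) : log 2 ≤ |log x| := by
  calc log 2 ≤ log x⁻¹ := log_le_log two_pos (by rw [le_inv_comm₀ two_pos hx₀]; linarith)
    _ = -log x := log_inv x
    _ ≤ |log x| := neg_le_abs _

lemma log_two_rpow_le_add {r ρ : ℝ} (hr : 0 ≤ r) (hρ₀ : 0 < ρ) (hρ₁ : ρ < 1) :
    log 2 ^ r ≤ |log ρ| ^ r + |log (1 - ρ)| ^ r := by
  have hlog2 := (log_pos one_lt_two).le
  rcases le_total ρ (1 / 2) with h | h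
  · have := rpow_le_rpow hlog2 (log_two_le_abs_log hρ₀ h) hr
    linarith [rpow_nonneg (abs_nonneg (log (1 - ρ))) r]
  · have := rpow_le_rpow hlog2 (log_two_le_abs_log (x := 1 - ρ) (by linarith) (by linarith)) hr
    linarith [rpow_nonneg (abs_nonneg (log ρ)) r]

lemma exists_tsum_abs_log_rpow_mul_zmGeom_le {r : ℝ} (hr : 1 ≤ r) :
    ∃ C > 0, ∀ ω₀ ρ : ℝ, 0 < ω₀ → ω₀ < 1 → 0 < ρ → ρ < 1 →
      ∑' k : ℕ, |log (zmGeom ω₀ ρ k)| ^ r * zmGeom ω₀ ρ k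
        ≤ ω₀ * |log ω₀| ^ r +
          (1 - ω₀) * C * (|log (1 - ω₀)| ^ r + |log ρ| ^ r + |log (1 - ρ)| ^ r / ρ) := by
  set K := 2 * (2 * r / exp 1) ^ r
  have hK : 0 ≤ K := by positivity
  have hlog2 : 0 < log 2 ^ r := rpow_pos_of_pos (log_pos one_lt_two) r
  -- the constant `K` is absorbed using `max |log ρ| |log (1 - ρ)| ≥ log 2`
  refine ⟨3 ^ (r - 1) * (1 + K / log 2 ^ r), by positivity, fun ω₀ ρ hω₀ hω₁ hρ₀ hρ₁ => ?_⟩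
  refine (tsum_abs_log_rpow_mul_zmGeom_le hr hω₀ hω₁ hρ₀ hρ₁).trans ?_
  set a := |log (1 - ω₀)| ^ r
  set b := |log ρ| ^ r
  set d := |log (1 - ρ)| ^ r
  have hd : d ≤ d / ρ := le_div_self (by positivity) hρ₀ hρ₁.le
  set c := K / log 2 ^ r
  have hc : 0 ≤ c := by positivity
  have hKle : K ≤ c * (b + d) := by
    rw [div_mul_eq_mul_div, le_div_iff₀ hlog2]
    exact mul_le_mul_of_nonneg_left (log_two_rpow_le_add (by linarith) hρ₀ hρ₁) hK
  have habsorb : a + b + K ≤ (1 + c) * (a + b + d / ρ) := by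
    have hca : 0 ≤ c * a := by positivity
    have hdρ : 0 ≤ d / ρ := by positivity
    linarith [mul_le_mul_of_nonneg_left hd hc]
  have h1ω : 0 ≤ 1 - ω₀ := by linarith
  calc ω₀ * |log ω₀| ^ r + (1 - ω₀) * 3 ^ (r - 1) * (a + b + K)
      ≤ ω₀ * |log ω₀| ^ r + (1 - ω₀) * 3 ^ (r - 1) * ((1 + c) * (a + b + d / ρ)) := by
        gcongr
    _ = _ := by ring

lemma abs_log_one_sub_le {ρ : ℝ} (hρ₀ : 0 ≤ ρ) (hρ : ρ ≤ 1 / 2) : |log (1 - ρ)| ≤ 2 * ρ := by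
  have hq : 0 < 1 - ρ := by linarith
  rw [abs_of_nonpos (log_nonpos hq.le (by linarith))]
  have hlog := one_sub_inv_le_log_of_pos hq
  have hinv : (1 - ρ)⁻¹ ≤ 1 + 2 * ρ := by
    rw [inv_le_iff_one_le_mul₀ hq]; nlinarith
  linarith

lemma abs_log_one_sub_rpow_div_le {r ρ : ℝ} (hr : 1 ≤ r) (hρ₀ : 0 < ρ) (hρ : ρ ≤ 1 / 2) :
    |log (1 - ρ)| ^ r / ρ ≤ 2 ^ r := by
  rw [div_le_iff₀ hρ₀]
  calc |log (1 - ρ)| ^ r ≤ (2 * ρ) ^ r :=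
        rpow_le_rpow (abs_nonneg _) (abs_log_one_sub_le hρ₀.le hρ) (by linarith)
    _ = 2 ^ r * ρ ^ (r - 1) * ρ := by
        rw [mul_rpow zero_le_two hρ₀.le, mul_assoc, ← rpow_add_one hρ₀.ne', sub_add_cancel]
    _ ≤ 2 ^ r * 1 * ρ := by
        gcongr
        exact rpow_le_one hρ₀.le (by linarith) (by linarith)
    _ = 2 ^ r * ρ := by ring

lemma tendsto_atTop_of_div_tendsto_zero {ι : Type*} {l : Filter ι} {f g : ι → ℝ}
    (hf : Tendsto f l atTop) (hg : ∀ i, 0 < g i) (hfg : Tendsto (fun i => f i / g i) l (𝓝 0)) :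
    Tendsto g l atTop := by
  refine tendsto_atTop_mono' l ?_ hf
  filter_upwards [hfg.eventually (gt_mem_nhds one_pos)] with i hi
  exact ((div_lt_one (hg i)).mp hi).le

lemma tendsto_div_rpow_of_le_add_rpow {ι : Type*} {l : Filter ι} {r c₀ c₁ : ℝ} (hr : 0 < r)
    {S B L : ι → ℝ} (hS : ∀ᶠ i in l, 0 ≤ S i ∧ S i ≤ c₀ + c₁ * B i ^ r) (hB : ∀ i, 0 ≤ B i)
    (hL : Tendsto L l atTop) (hBL : Tendsto (fun i => B i / L i) l (𝓝 0)) :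
    Tendsto (fun i => S i / L i ^ r) l (𝓝 0) := by
  have hLr : Tendsto (fun i => L i ^ r) l atTop := (tendsto_rpow_atTop hr).comp hL
  have hmaj : Tendsto (fun i => c₀ / L i ^ r + c₁ * (B i / L i) ^ r) l (𝓝 0) := by
    simpa [zero_rpow hr.ne'] using
      (tendsto_const_nhds.div_atTop hLr).add ((hBL.rpow_const (Or.inr hr.le)).const_mul c₁)
  refine squeeze_zero' ?_ ?_ hmaj
  · filter_upwards [hS, hL.eventually_gt_atTop 0] with i hSi hLi
    exact div_nonneg hSi.1 (by positivity)
  · filter_upwards [hS, hL.eventually_gt_atTop 0] with i hSi hLi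
    rw [div_rpow (hB i) hLi.le, mul_div_assoc', ← add_div]
    exact div_le_div_of_nonneg_right hSi.2 (by positivity)

theorem stmt16 (r : ℝ) (hr : 1 ≤ r) :
    (∃ C > 0, ∀ ω₀ ρ : ℝ, 0 < ω₀ → ω₀ < 1 → 0 < ρ → ρ < 1 →
      ∑' k : ℕ, |Real.log (zmGeom ω₀ ρ k)| ^ r * zmGeom ω₀ ρ k
        ≤ ω₀ * |Real.log ω₀| ^ r +
          (1 - ω₀) * C *
            (|Real.log (1 - ω₀)| ^ r + |Real.log ρ| ^ r + |Real.log (1 - ρ)| ^ r / ρ)) ∧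
    (∀ ω₀ : ℝ, 0 < ω₀ → ω₀ < 1 → ∀ α ρ : ℕ → ℝ,
      (∀ n, 0 < α n ∧ α n < 1) → (∀ n, 0 < ρ n ∧ ρ n < 1) →
      Tendsto ρ atTop (nhds 0) →
      Tendsto (fun n => |Real.log (ρ n)| / |Real.log (α n)|) atTop (nhds 0) →
      Tendsto (fun n =>
          (∑' k : ℕ, |Real.log (zmGeom ω₀ (ρ n) k)| ^ r * zmGeom ω₀ (ρ n) k) /
            |Real.log (α n)| ^ r) atTop (nhds 0)) := by
  obtain ⟨C, hC, hbound⟩ := exists_tsum_abs_log_rpow_mul_zmGeom_le hr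
  refine ⟨⟨C, hC, hbound⟩, fun ω₀ hω₀ hω₁ α ρ hα hρ hρlim hratio => ?_⟩
  have hlogρ : Tendsto (fun n => |log (ρ n)|) atTop atTop :=
    tendsto_abs_atBot_atTop.comp <| tendsto_log_nhdsGT_zero.comp <|
      tendsto_nhdsWithin_of_tendsto_nhds_of_eventually_within _ hρlim (.of_forall fun n => (hρ n).1)
  have hlogα := tendsto_atTop_of_div_tendsto_zero hlogρ
    (fun n => abs_pos.mpr (log_neg (hα n).1 (hα n).2).ne) hratio
  refine tendsto_div_rpow_of_le_add_rpow (c₀ := ω₀ * |log ω₀| ^ r +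
    (1 - ω₀) * C * (|log (1 - ω₀)| ^ r + 2 ^ r)) (c₁ := (1 - ω₀) * C)
    (by linarith) ?_ (fun n => abs_nonneg _) hlogα hratio
  filter_upwards [hρlim.eventually (ge_mem_nhds one_half_pos)] with n hn
  have hE := abs_log_one_sub_rpow_div_le hr (hρ n).1 hn
  refine ⟨tsum_nonneg fun k => mul_nonneg (by positivity)
    (zmGeom_nonneg hω₀.le hω₁.le (hρ n).1.le (hρ n).2.le k), ?_⟩
  refine (hbound ω₀ (ρ n) hω₀ hω₁ (hρ n).1 (hρ n).2).trans ?_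
  have : 0 ≤ (1 - ω₀) * C := mul_nonneg (by linarith) hC.le
  linarith [mul_le_mul_of_nonneg_left hE this]
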